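/- arXiv:0909.2146 — 5 statements merged into one kernel-verified Lean document; each statement's English description precedes it below -/
import Mathlib

section
/- Let x be a sequence of positive reals satisfying x(k+1) = A(k) + B(k) * x(k+1-ℓ)^p / x(k+1-s)^r for k ≥ 0, where p ≥ 0, r ≥ 0. Suppose there exist M > 0, a_m > 0, b_M > 0 such that for all k: a_m ≤ A(k) ≤ M * (1 - b_M * M^(p-1)/a_m^r), 0 < B(k) ≤ b_M ≤ a_m^r / M^(p-1), and a_m ≤ x(j) ≤ M for all initial indices min(1-ℓ,1-s) ≤ j ≤ 0. Then a_m ≤ x(k) ≤ M for all k ≥ min(1-ℓ,1-s). -/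
open Real

/-- Corollary 2.2: simplified uniform boundedness result. -/
theorem stmt_1
    (A B : ℕ → ℝ) (p r : ℝ) (hp : 0 ≤ p) (hr : 0 ≤ r) (ℓ s : ℕ+) (x : ℤ → ℝ)
    (hxpos : ∀ k : ℤ, 0 < x k)
    (hrec : ∀ k : ℕ, x ((k : ℤ) + 1) =
      A k + B k * (x ((k : ℤ) + 1 - (ℓ : ℤ))) ^ p / (x ((k : ℤ) + 1 - (s : ℤ))) ^ r)
    (M a_m b_M : ℝ)
    (hM : 0 < M) (ham : 0 < a_m) (hbM : 0 < b_M)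
    (hA : ∀ k : ℕ, a_m ≤ A k ∧ A k ≤ M * (1 - b_M * M ^ (p - 1) / a_m ^ r))
    (hB : ∀ k : ℕ, 0 < B k ∧ B k ≤ b_M)
    (hbMle : b_M ≤ a_m ^ r / M ^ (p - 1))
    (hinit : ∀ j : ℤ, min (1 - (ℓ : ℤ)) (1 - (s : ℤ)) ≤ j → j ≤ 0 → a_m ≤ x j ∧ x j ≤ M) :
    ∀ k : ℤ, min (1 - (ℓ : ℤ)) (1 - (s : ℤ)) ≤ k → a_m ≤ x k ∧ x k ≤ M := by
  have hl1 : 1 ≤ (ℓ : ℤ) := by exact_mod_cast ℓ.one_le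
  have hs1 : 1 ≤ (s : ℤ) := by exact_mod_cast s.one_le
  have hml : min (1 - (ℓ : ℤ)) (1 - (s : ℤ)) ≤ 1 - (ℓ : ℤ) := min_le_left _ _
  have hms : min (1 - (ℓ : ℤ)) (1 - (s : ℤ)) ≤ 1 - (s : ℤ) := min_le_right _ _
  have hMp : M ^ p = M * M ^ (p - 1) := by
    have h : p = 1 + (p - 1) := by ring
    rw [h, Real.rpow_add hM, Real.rpow_one]
    ring_nf
  have key : ∀ n : ℕ, ∀ j : ℤ, min (1 - (ℓ : ℤ)) (1 - (s : ℤ)) ≤ j → j ≤ (n : ℤ) →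
      a_m ≤ x j ∧ x j ≤ M := by
    intro n
    induction n with
    | zero => intro j h1 h2; exact hinit j h1 h2
    | succ n ih =>
      intro j h1 h2
      rcases lt_or_eq_of_le h2 with h | h
      · exact ih j h1 (by omega)
      · have hj : j = (n : ℤ) + 1 := by push_cast at h ⊢; omega
        subst hj
        have hxl := ih ((n : ℤ) + 1 - (ℓ : ℤ)) (by omega) (by omega)
        have hxs := ih ((n : ℤ) + 1 - (s : ℤ)) (by omega) (by omega)
        have hxlpos := hxpos ((n : ℤ) + 1 - (ℓ : ℤ))
        have hxspos := hxpos ((n : ℤ) + 1 - (s : ℤ))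
        have hnum_pos : 0 < (x ((n : ℤ) + 1 - (ℓ : ℤ))) ^ p :=
          Real.rpow_pos_of_pos hxlpos p
        have hden_pos : 0 < (x ((n : ℤ) + 1 - (s : ℤ))) ^ r :=
          Real.rpow_pos_of_pos hxspos r
        have hterm_pos : 0 < B n * (x ((n : ℤ) + 1 - (ℓ : ℤ))) ^ p / (x ((n : ℤ) + 1 - (s : ℤ))) ^ r :=
          div_pos (mul_pos (hB n).1 hnum_pos) hden_pos
        have hrecn := hrec n
        constructor
        · rw [hrecn]
          have := (hA n).1
          linarith
        · rw [hrecn]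
          have h1 : (x ((n : ℤ) + 1 - (ℓ : ℤ))) ^ p ≤ M ^ p :=
            Real.rpow_le_rpow hxlpos.le hxl.2 hp
          have h2 : a_m ^ r ≤ (x ((n : ℤ) + 1 - (s : ℤ))) ^ r :=
            Real.rpow_le_rpow ham.le hxs.1 hr
          have hamr : (0:ℝ) < a_m ^ r := Real.rpow_pos_of_pos ham r
          have hterm_le : B n * (x ((n : ℤ) + 1 - (ℓ : ℤ))) ^ p / (x ((n : ℤ) + 1 - (s : ℤ))) ^ r
              ≤ b_M * M ^ p / a_m ^ r := by
            apply div_le_div₀ (by positivity)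
              (mul_le_mul (hB n).2 h1 hnum_pos.le hbM.le) hamr h2
          have heq : M * (1 - b_M * M ^ (p - 1) / a_m ^ r) + b_M * M ^ p / a_m ^ r = M := by
            rw [hMp]; field_simp; ring
          have := (hA n).2
          linarith
  intro k hk
  rcases le_or_gt k 0 with h | h
  · exact hinit k hk h
  · exact key k.toNat k hk (by omega)
end

section
/- Let q ≥ 1, and for i = 1,…,q let p_i, r_i ∈ ℝ with 0 < p_i < 1, positive integers ℓ_i, s_i, and sequences B_i : ℕ → ℝ with values in [0, b] for some b > 0. Let A : ℕ → ℝ satisfy 0 < a_m ≤ A(k) ≤ a_M for all k. Then every sequence x of positive reals satisfying x(k+1) = A(k) + Σ_{i=1}^q B_i(k) * x(k+1-ℓ_i)^{p_i} / x(k+1-s_i)^{r_i} for all k ≥ 0, with positive bounded initial conditions and with x(j) ≥ a_m for all j, is bounded, provided r_i ≥ 0 for all i. -/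
open Real Finset

/-- Theorem 2.8 (i): boundedness of the solutions when all `p i ∈ (0,1)`. -/
theorem stmt_2
    (q : ℕ) (hq : 1 ≤ q)
    (p r : Fin q → ℝ) (ℓ s : Fin q → ℕ+)
    (hp : ∀ i, 0 < p i ∧ p i < 1) (hr : ∀ i, 0 ≤ r i)
    (B : Fin q → ℕ → ℝ) (b : ℝ) (hb : 0 < b)
    (hB : ∀ i k, 0 ≤ B i k ∧ B i k ≤ b)
    (A : ℕ → ℝ) (a_m a_M : ℝ) (ham : 0 < a_m)
    (hA : ∀ k, a_m ≤ A k ∧ A k ≤ a_M)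
    (x : ℤ → ℝ) (hxpos : ∀ k, 0 < x k)
    (hrec : ∀ k : ℕ, x ((k : ℤ) + 1) = A k + ∑ i : Fin q,
      B i k * (x ((k : ℤ) + 1 - (ℓ i : ℤ))) ^ (p i) / (x ((k : ℤ) + 1 - (s i : ℤ))) ^ (r i))
    (hinit : ∃ C : ℝ, ∀ j : ℤ, j ≤ 0 → x j ≤ C)
    (hlow : ∀ j : ℤ, a_m ≤ x j) :
    ∃ C : ℝ, ∀ k : ℤ, x k ≤ C := by
  obtain ⟨C0, hC0⟩ := hinit
  haveI : Nonempty (Fin q) := ⟨⟨0, hq⟩⟩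
  have hne : (Finset.univ : Finset (Fin q)).Nonempty := Finset.univ_nonempty
  set pm := Finset.univ.sup' hne p with hpmdef
  obtain ⟨i0, -, hi0⟩ := Finset.exists_mem_eq_sup' hne p
  have hpm1 : pm < 1 := by rw [hpmdef, hi0]; exact (hp i0).2
  have hpm0 : 0 < pm := by rw [hpmdef, hi0]; exact (hp i0).1
  have hple : ∀ i, p i ≤ pm := fun i => Finset.le_sup' p (Finset.mem_univ i)
  set D := ∑ i : Fin q, b / a_m ^ (r i) with hDdef
  have hDpos : 0 < D :=
    Finset.sum_pos (fun i _ => div_pos hb (Real.rpow_pos_of_pos ham _)) hne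
  have haM : 0 < a_M := lt_of_lt_of_le ham ((hA 0).1.trans (hA 0).2)
  set C := max (max 1 C0) (max (2 * a_M) ((2 * D) ^ (1 - pm)⁻¹)) with hCdef
  have hC1 : (1 : ℝ) ≤ C := le_max_of_le_left (le_max_left _ _)
  have hCC0 : C0 ≤ C := le_max_of_le_left (le_max_right _ _)
  have hCaM : 2 * a_M ≤ C := le_max_of_le_right (le_max_left _ _)
  have hCD : (2 * D) ^ (1 - pm)⁻¹ ≤ C := le_max_of_le_right (le_max_right _ _)
  have hCpos : (0 : ℝ) < C := lt_of_lt_of_le one_pos hC1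
  have h2D : 2 * D ≤ C ^ (1 - pm) := by
    have h1 : ((2 * D) ^ (1 - pm)⁻¹) ^ (1 - pm) = 2 * D :=
      Real.rpow_inv_rpow (by positivity) (by linarith)
    calc 2 * D = ((2 * D) ^ (1 - pm)⁻¹) ^ (1 - pm) := h1.symm
      _ ≤ C ^ (1 - pm) := Real.rpow_le_rpow (by positivity) hCD (by linarith)
  have hsplit : C ^ pm * C ^ (1 - pm) = C := by
    rw [← Real.rpow_add hCpos]
    norm_num
  have hmain : a_M + D * C ^ pm ≤ C := by
    have hpmpos : (0 : ℝ) < C ^ pm := Real.rpow_pos_of_pos hCpos pm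
    nlinarith [mul_le_mul_of_nonneg_right h2D hpmpos.le]
  have hnegC : ∀ j : ℤ, j ≤ 0 → x j ≤ C := fun j hj => (hC0 j hj).trans hCC0
  have hnat : ∀ n : ℕ, x (n : ℤ) ≤ C := by
    intro n
    induction n using Nat.strong_induction_on with
    | _ n ih =>
      match n with
      | 0 => exact hnegC 0 le_rfl
      | Nat.succ k =>
        have hcast : ((Nat.succ k : ℕ) : ℤ) = (k : ℤ) + 1 := by push_cast; ring
        rw [hcast, hrec k]
        have hxleC : ∀ j : ℤ, j ≤ (k : ℤ) → x j ≤ C := by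
          intro j hj
          rcases le_or_gt j 0 with h | h
          · exact hnegC j h
          · obtain ⟨m, hm⟩ := Int.eq_ofNat_of_zero_le h.le
            have hmk : m < k + 1 := by omega
            rw [hm]; exact ih m hmk
        have hterm : ∀ i : Fin q,
            B i k * (x ((k : ℤ) + 1 - (ℓ i : ℤ))) ^ (p i) /
              (x ((k : ℤ) + 1 - (s i : ℤ))) ^ (r i) ≤ b / a_m ^ (r i) * C ^ pm := by
          intro i
          have hl1 : (1 : ℤ) ≤ (ℓ i : ℤ) := by exact_mod_cast (ℓ i).one_le
          have hxle : x ((k : ℤ) + 1 - (ℓ i : ℤ)) ≤ C := hxleC _ (by omega)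
          have hnum : (x ((k : ℤ) + 1 - (ℓ i : ℤ))) ^ (p i) ≤ C ^ pm := by
            calc (x ((k : ℤ) + 1 - (ℓ i : ℤ))) ^ (p i) ≤ C ^ (p i) :=
                  Real.rpow_le_rpow (hxpos _).le hxle (hp i).1.le
              _ ≤ C ^ pm := Real.rpow_le_rpow_of_exponent_le hC1 (hple i)
          have hden : a_m ^ (r i) ≤ (x ((k : ℤ) + 1 - (s i : ℤ))) ^ (r i) :=
            Real.rpow_le_rpow ham.le (hlow _) (hr i)
          have hdenpos : (0 : ℝ) < a_m ^ (r i) := Real.rpow_pos_of_pos ham _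
          have hnum' : B i k * (x ((k : ℤ) + 1 - (ℓ i : ℤ))) ^ (p i) ≤ b * C ^ pm :=
            mul_le_mul (hB i k).2 hnum (Real.rpow_nonneg (hxpos _).le _) hb.le
          calc B i k * (x ((k : ℤ) + 1 - (ℓ i : ℤ))) ^ (p i) /
                (x ((k : ℤ) + 1 - (s i : ℤ))) ^ (r i)
              ≤ b * C ^ pm / a_m ^ (r i) :=
                div_le_div₀ (by positivity) hnum' hdenpos hden
            _ = b / a_m ^ (r i) * C ^ pm := by ring
        calc A k + ∑ i : Fin q,
              B i k * (x ((k : ℤ) + 1 - (ℓ i : ℤ))) ^ (p i) /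
                (x ((k : ℤ) + 1 - (s i : ℤ))) ^ (r i)
            ≤ a_M + ∑ i : Fin q, b / a_m ^ (r i) * C ^ pm :=
              add_le_add (hA k).2 (Finset.sum_le_sum fun i _ => hterm i)
          _ = a_M + D * C ^ pm := by rw [← Finset.sum_mul]
          _ ≤ C := hmain
  refine ⟨C, fun k => ?_⟩
  rcases le_or_gt k 0 with h | h
  · exact hnegC k h
  · obtain ⟨m, hm⟩ := Int.eq_ofNat_of_zero_le h.le
    rw [hm]; exact hnat m
end

section
/- Let p ∈ (0,1), r ≥ 0, A, B : ℕ → ℝ with 0 < a_m ≤ A(k) ≤ a_M and 0 ≤ B(k) ≤ b for all k. Then every positive solution of x(k+1) = A(k) + B(k) * x(k+1-ℓ)^p / x(k+1-s)^r with bounded positive initial conditions is bounded. -/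
open Real

/-- Theorem 2.8 (ii): single-term boundedness result. -/
theorem stmt_3
    (p r : ℝ) (hp : 0 < p ∧ p < 1) (hr : 0 ≤ r) (ℓ s : ℕ+)
    (A B : ℕ → ℝ) (a_m a_M b : ℝ) (ham : 0 < a_m)
    (hA : ∀ k, a_m ≤ A k ∧ A k ≤ a_M)
    (hB : ∀ k, 0 ≤ B k ∧ B k ≤ b)
    (x : ℤ → ℝ) (hxpos : ∀ k, 0 < x k)
    (hrec : ∀ k : ℕ, x ((k : ℤ) + 1) =
      A k + B k * (x ((k : ℤ) + 1 - (ℓ : ℤ))) ^ p / (x ((k : ℤ) + 1 - (s : ℤ))) ^ r)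
    (hinit : ∃ C : ℝ, ∀ j : ℤ, j ≤ 0 → x j ≤ C)
    (hlow : ∀ j : ℤ, 1 ≤ j → a_m ≤ x j) :
    ∃ C : ℝ, ∀ k : ℤ, x k ≤ C := by
  obtain ⟨hp0, hp1⟩ := hp
  obtain ⟨C0, hC0⟩ := hinit
  have hb : 0 ≤ b := le_trans (hB 0).1 (hB 0).2
  have hamr : 0 < a_m ^ r := Real.rpow_pos_of_pos ham r
  set c := b / a_m ^ r with hc
  have hc0 : 0 ≤ c := div_nonneg hb hamr.le
  have hsne : (Finset.Icc (1:ℤ) (s:ℤ)).Nonempty := by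
    refine ⟨1, ?_⟩
    have := s.one_le
    simp only [Finset.mem_Icc]
    exact ⟨le_refl 1, by exact_mod_cast this⟩
  set M2 := (Finset.Icc (1:ℤ) (s:ℤ)).sup' hsne x with hM2def
  set M : ℝ := max (max (max 1 C0) (max ((2*c) ^ (1/(1-p))) (2*a_M))) M2 with hM
  have hM1 : (1:ℝ) ≤ M := le_trans (le_max_left _ _) (le_trans (le_max_left _ _) (le_max_left _ _))
  have hMC : C0 ≤ M := le_trans (le_max_right _ _) (le_trans (le_max_left _ _) (le_max_left _ _))
  have hMc : (2*c) ^ (1/(1-p)) ≤ M :=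
    le_trans (le_max_left _ _) (le_trans (le_max_right _ _) (le_max_left _ _))
  have hMa : 2*a_M ≤ M :=
    le_trans (le_max_right _ _) (le_trans (le_max_right _ _) (le_max_left _ _))
  have hM2 : M2 ≤ M := le_max_right _ _
  have h1p : 0 < 1 - p := by linarith
  have hMpos : 0 < M := lt_of_lt_of_le one_pos hM1
  have hkey : a_M + c * M ^ p ≤ M := by
    have h2c : 2*c ≤ M ^ (1-p) := by
      have e1 : ((2*c) ^ (1/(1-p))) ^ (1-p) = 2*c := by
        rw [← Real.rpow_mul (by positivity), one_div_mul_cancel h1p.ne', Real.rpow_one]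
      calc 2*c = ((2*c) ^ (1/(1-p))) ^ (1-p) := e1.symm
        _ ≤ M ^ (1-p) := Real.rpow_le_rpow (Real.rpow_nonneg (by positivity) _) hMc h1p.le
    have h3 : c * M ^ p ≤ M / 2 := by
      have h4 : c * M^p ≤ (M^(1-p)/2) * M^p := by
        apply mul_le_mul_of_nonneg_right _ (Real.rpow_nonneg hMpos.le p)
        linarith
      have h5 : (M^(1-p)/2) * M^p = M / 2 := by
        rw [div_mul_eq_mul_div, ← Real.rpow_add hMpos]
        norm_num
      linarith [h4, h5 ▸ h4]
    linarith
  have main : ∀ n : ℕ, x ((n:ℤ)+1) ≤ M := by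
    intro n
    induction n using Nat.strong_induction_on with
    | _ n ih =>
      by_cases hns : (s:ℕ) ≤ n
      · have hden : a_m ^ r ≤ x ((n:ℤ)+1-(s:ℤ)) ^ r := by
          apply Real.rpow_le_rpow ham.le _ hr
          apply hlow
          have : (1:ℤ) ≤ (n:ℤ) + 1 - (s:ℤ) := by
            have hs' : ((s:ℕ):ℤ) ≤ (n:ℤ) := by exact_mod_cast hns
            omega
          exact this
        have hxM : x ((n:ℤ)+1-(ℓ:ℤ)) ≤ M := by
          by_cases hl : (ℓ:ℕ) ≤ n
          · have e : ((n:ℤ)+1-(ℓ:ℤ)) = ((n-(ℓ:ℕ) : ℕ):ℤ)+1 := by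
              push_cast [hl]; ring
            rw [e]
            exact ih (n-(ℓ:ℕ)) (by have h1 : 1 ≤ (ℓ:ℕ) := ℓ.one_le; omega)
          · apply le_trans (hC0 _ _) hMC
            have hl' : (n:ℤ) < ((ℓ:ℕ):ℤ) := by exact_mod_cast Nat.lt_of_not_le hl
            omega
        have hnum : x ((n:ℤ)+1-(ℓ:ℤ)) ^ p ≤ M ^ p :=
          Real.rpow_le_rpow (hxpos _).le hxM hp0.le
        rw [hrec n]
        have hfrac : B n * x ((n:ℤ)+1-(ℓ:ℤ)) ^ p / x ((n:ℤ)+1-(s:ℤ)) ^ r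
            ≤ b * M ^ p / a_m ^ r := by
          apply div_le_div₀ (by positivity) _ hamr hden
          exact mul_le_mul (hB n).2 hnum (Real.rpow_nonneg (hxpos _).le p) hb
        have e2 : b * M ^ p / a_m ^ r = c * M ^ p := by
          rw [hc]; ring
        calc A n + B n * x ((n:ℤ)+1-(ℓ:ℤ)) ^ p / x ((n:ℤ)+1-(s:ℤ)) ^ r
            ≤ a_M + b * M ^ p / a_m ^ r := add_le_add (hA n).2 hfrac
          _ = a_M + c * M ^ p := by rw [e2]
          _ ≤ M := hkey
      · have hmem : ((n:ℤ)+1) ∈ Finset.Icc (1:ℤ) (s:ℤ) := by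
          simp only [Finset.mem_Icc]
          have hs' : (n:ℤ) < ((s:ℕ):ℤ) := by exact_mod_cast Nat.lt_of_not_le hns
          omega
        exact le_trans (Finset.le_sup' x hmem) hM2
  refine ⟨max M C0, fun k => ?_⟩
  rcases le_or_gt k 0 with hk | hk
  · exact (hC0 k hk).trans (le_max_right _ _)
  · obtain ⟨n, rfl⟩ : ∃ n : ℕ, k = (n:ℤ)+1 := ⟨(k-1).toNat, by omega⟩
    exact (main n).trans (le_max_left _ _)
end

section
/- Let A > 0, B_i > 0 for i = 1,…,q, with Q1 = {i : r_i = p_i - 1} and Q3 = {i : r_i < p_i - 1}. If Σ_{i∈Q1} B_i + Σ_{i∈Q3} B_i A^{|r_i - p_i + 1|} > 1, then there is no x̄ with 0 < x̄ ≤ 1/A satisfying (A + Σ_{i=1}^q B_i x̄^{r_i - p_i}) x̄ = 1; equivalently, the equation x = A + Σ_{i=1}^q B_i x^{p_i - r_i} has no solution x ≥ A. -/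
open Real Finset

lemma key_noeq
    (q : ℕ) (A : ℝ) (hA : 0 < A) (B : Fin q → ℝ) (p r : Fin q → ℝ)
    (hB : ∀ i, 0 < B i)
    (Q1 Q3 : Finset (Fin q))
    (hQ1 : Q1 = Finset.univ.filter fun i => r i = p i - 1)
    (hQ3 : Q3 = Finset.univ.filter fun i => r i < p i - 1)
    (hbig : (∑ i ∈ Q1, B i) + ∑ i ∈ Q3, B i * A ^ |r i - p i + 1| > 1) :
    ¬ ∃ x : ℝ, A ≤ x ∧ x = A + ∑ i : Fin q, B i * x ^ (p i - r i) := by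
  rintro ⟨x, hxA, heq⟩
  have hx0 : 0 < x := hA.trans_le hxA
  have hdisj : Disjoint Q1 Q3 := by
    subst hQ1 hQ3
    rw [Finset.disjoint_left]
    intro i hi1 hi3
    simp only [Finset.mem_filter] at hi1 hi3
    linarith [hi1.2, hi3.2]
  -- bound for Q1 terms
  have h1 : ∀ i ∈ Q1, B i * x = B i * x ^ (p i - r i) := by
    intro i hi
    rw [hQ1, Finset.mem_filter] at hi
    have : p i - r i = 1 := by linarith [hi.2]
    rw [this, Real.rpow_one]
  -- bound for Q3 terms
  have h3 : ∀ i ∈ Q3, B i * A ^ |r i - p i + 1| * x ≤ B i * x ^ (p i - r i) := by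
    intro i hi
    rw [hQ3, Finset.mem_filter] at hi
    have he : |r i - p i + 1| = p i - r i - 1 := by
      rw [abs_of_neg (by linarith [hi.2])]; ring
    rw [he]
    have h1 : A ^ (p i - r i - 1) ≤ x ^ (p i - r i - 1) :=
      Real.rpow_le_rpow hA.le hxA (by linarith [hi.2])
    have h2 : x ^ (p i - r i - 1) * x = x ^ (p i - r i) := by
      have h := Real.rpow_add hx0 (p i - r i - 1) 1
      rw [Real.rpow_one] at h
      rw [← h]; norm_num
    calc B i * A ^ (p i - r i - 1) * x ≤ B i * x ^ (p i - r i - 1) * x := by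
          apply mul_le_mul_of_nonneg_right _ hx0.le
          exact mul_le_mul_of_nonneg_left h1 (hB i).le
      _ = B i * x ^ (p i - r i) := by rw [mul_assoc, h2]
  set S := ∑ i : Fin q, B i * x ^ (p i - r i) with hS
  have hbound : ((∑ i ∈ Q1, B i) + ∑ i ∈ Q3, B i * A ^ |r i - p i + 1|) * x ≤ S := by
    have hsum : ∑ i ∈ Q1 ∪ Q3, B i * x ^ (p i - r i) ≤ S := by
      apply Finset.sum_le_sum_of_subset_of_nonneg (Finset.subset_univ _)
      intro i _ _
      exact mul_nonneg (hB i).le (Real.rpow_nonneg hx0.le _)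
    calc ((∑ i ∈ Q1, B i) + ∑ i ∈ Q3, B i * A ^ |r i - p i + 1|) * x
        = ∑ i ∈ Q1, B i * x + ∑ i ∈ Q3, B i * A ^ |r i - p i + 1| * x := by
          rw [add_mul, Finset.sum_mul, Finset.sum_mul]
      _ ≤ ∑ i ∈ Q1, B i * x ^ (p i - r i) + ∑ i ∈ Q3, B i * x ^ (p i - r i) := by
          apply add_le_add
          · exact le_of_eq (Finset.sum_congr rfl h1)
          · exact Finset.sum_le_sum h3
      _ = ∑ i ∈ Q1 ∪ Q3, B i * x ^ (p i - r i) := (Finset.sum_union hdisj).symm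
      _ ≤ S := hsum
  set c := (∑ i ∈ Q1, B i) + ∑ i ∈ Q3, B i * A ^ |r i - p i + 1| with hc
  have : A + c * x ≤ x := by linarith
  nlinarith [mul_pos hx0 (sub_pos.mpr hbig)]

/-- Lemma 3.1 (vi): nonexistence of equilibrium points. -/
theorem stmt_8
    (q : ℕ) (A : ℝ) (hA : 0 < A) (B : Fin q → ℝ) (p r : Fin q → ℝ)
    (hB : ∀ i, 0 < B i)
    (Q1 Q3 : Finset (Fin q))
    (hQ1 : Q1 = Finset.univ.filter fun i => r i = p i - 1)
    (hQ3 : Q3 = Finset.univ.filter fun i => r i < p i - 1)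
    (hbig : (∑ i ∈ Q1, B i) + ∑ i ∈ Q3, B i * A ^ |r i - p i + 1| > 1) :
    (¬ ∃ xbar : ℝ, 0 < xbar ∧ xbar ≤ 1 / A ∧
        (A + ∑ i : Fin q, B i * xbar ^ (r i - p i)) * xbar = 1) ∧
    (¬ ∃ x : ℝ, A ≤ x ∧ x = A + ∑ i : Fin q, B i * x ^ (p i - r i)) := by
  have hkey := key_noeq q A hA B p r hB Q1 Q3 hQ1 hQ3 hbig
  constructor
  · rintro ⟨y, hy0, hyA, heq⟩
    apply hkey
    refine ⟨1 / y, ?_, ?_⟩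
    · rw [le_div_iff₀ hy0]
      calc A * y ≤ A * (1 / A) := mul_le_mul_of_nonneg_left hyA hA.le
        _ = 1 := by field_simp
    · have hterm : ∀ i, y ^ (r i - p i) = (1 / y) ^ (p i - r i) := by
        intro i
        rw [one_div, Real.inv_rpow hy0.le, show r i - p i = -(p i - r i) by ring,
          Real.rpow_neg hy0.le]
      simp only [← hterm]
      field_simp
      linarith [heq]
  · exact hkey
end

section
/- Let A > 0, B > 0, 0 < m ≤ M, p, r ∈ ℝ. Suppose m(1 - b_m m^{p-1}/M^r) ≤ A ≤ M(1 - b_M M^{p-1}/m^r) with 0 ≤ b_m ≤ B ≤ b_M and m ≥ b_M^{1/r} M^{(p-1)/r} (r > 0). Then for any x, y with m ≤ x ≤ M and m ≤ y ≤ M, one has m ≤ A + B x^p / y^r ≤ M. -/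
open Real

/-- One-step induction kernel of Theorem 2.1 / Corollary 2.3: the interval `[m, M]`
is invariant for `(x, y) ↦ A + B x^p / y^r`. -/
theorem stmt_16
    (A B m M b_m b_M p r : ℝ)
    (hA : 0 < A) (hB : 0 < B) (hm : 0 < m) (hmM : m ≤ M)
    (hp : 1 ≤ p) (hr : 0 ≤ r) (hrpos : 0 < r)
    (hbm : 0 ≤ b_m) (hbmB : b_m ≤ B) (hBbM : B ≤ b_M)
    (hAlow : m * (1 - b_m * m ^ (p - 1) / M ^ r) ≤ A)
    (hAup : A ≤ M * (1 - b_M * M ^ (p - 1) / m ^ r))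
    (hnec : b_M ^ (1 / r) * M ^ ((p - 1) / r) ≤ m) :
    ∀ x y : ℝ, m ≤ x → x ≤ M → m ≤ y → y ≤ M →
      m ≤ A + B * x ^ p / y ^ r ∧ A + B * x ^ p / y ^ r ≤ M := by
  intro x y hmx hxM hmy hyM
  have hM : 0 < M := lt_of_lt_of_le hm hmM
  have hx0 : 0 < x := lt_of_lt_of_le hm hmx
  have hy0 : 0 < y := lt_of_lt_of_le hm hmy
  have hp0 : 0 ≤ p := le_trans zero_le_one hp
  -- rpow monotonicity
  have hxp1 : m ^ p ≤ x ^ p := Real.rpow_le_rpow hm.le hmx hp0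
  have hxp2 : x ^ p ≤ M ^ p := Real.rpow_le_rpow hx0.le hxM hp0
  have hyr1 : m ^ r ≤ y ^ r := Real.rpow_le_rpow hm.le hmy hr
  have hyr2 : y ^ r ≤ M ^ r := Real.rpow_le_rpow hy0.le hyM hr
  have hmr : (0:ℝ) < m ^ r := Real.rpow_pos_of_pos hm r
  have hyr0 : (0:ℝ) < y ^ r := Real.rpow_pos_of_pos hy0 r
  have hmp : (0:ℝ) < m ^ p := Real.rpow_pos_of_pos hm p
  have hMp : (0:ℝ) < M ^ p := Real.rpow_pos_of_pos hM p
  -- split powers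
  have hmm : m * m ^ (p - 1) = m ^ p := by
    have h := Real.rpow_add hm 1 (p - 1)
    rw [show (1:ℝ) + (p - 1) = p by ring, Real.rpow_one] at h
    exact h.symm
  have hMM : M * M ^ (p - 1) = M ^ p := by
    have h := Real.rpow_add hM 1 (p - 1)
    rw [show (1:ℝ) + (p - 1) = p by ring, Real.rpow_one] at h
    exact h.symm
  -- bounds on the fraction
  have hlow : b_m * m ^ p / M ^ r ≤ B * x ^ p / y ^ r :=
    div_le_div₀ (by positivity) (mul_le_mul hbmB hxp1 hmp.le hB.le) hyr0 hyr2
  have hup : B * x ^ p / y ^ r ≤ b_M * M ^ p / m ^ r :=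
    div_le_div₀ (mul_nonneg (le_trans hB.le hBbM) hMp.le) (mul_le_mul hBbM hxp2 (by positivity) (le_trans hB.le hBbM))
      hmr hyr1
  have e1 : m * (1 - b_m * m ^ (p - 1) / M ^ r) = m - b_m * m ^ p / M ^ r := by
    rw [← hmm]; ring
  have e2 : M * (1 - b_M * M ^ (p - 1) / m ^ r) = M - b_M * M ^ p / m ^ r := by
    rw [← hMM]; ring
  rw [e1] at hAlow
  rw [e2] at hAup
  constructor <;> linarith
end
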